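/- arXiv:1407.6988 — 5 statements merged into one kernel-verified Lean document; each statement's English description precedes it below -/
import Mathlib

section
/- Let a > 0, b > 0, and let f₁(z) = ∑_{k=1}^∞ z^k/(k+a)^b for |z| < 1. Then for all z with |z| < 1, f₁(z) = (z/Γ(b)) ∫₀^∞ [ln(1+t)]^{b-1} / ((1+t)^{a+1} (t - (z-1))) dt. -/
open MeasureTheory Set Real

/-!
Substituting `t = exp u - 1` turns the integral into the Mellin transform at `b` of
`exp (-a u) / (exp u - z)`. For `u > 0` the geometric series gives
`exp (-a u) / (exp u - z) = ∑ z ^ k exp (-(k + 1 + a) u)`, and integrating termwise against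
`u ^ (b - 1)` produces `Γ(b) ∑ z ^ k / (k + 1 + a) ^ b`.
-/

theorem hasSum_pow_div_pow_succ {𝕜 : Type*} [NormedField 𝕜] [CompleteSpace 𝕜] {z w : 𝕜}
    (h : ‖z‖ < ‖w‖) : HasSum (fun k : ℕ => z ^ k / w ^ (k + 1)) (w - z)⁻¹ := by
  have hw : w ≠ 0 := norm_pos_iff.mp ((norm_nonneg z).trans_lt h)
  have hwz : w - z ≠ 0 := sub_ne_zero.mpr (by rintro rfl; exact h.false)
  have hq : ‖z / w‖ < 1 := by rwa [norm_div, div_lt_one (norm_pos_iff.mpr hw)]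
  convert (hasSum_geometric_of_norm_lt_one hq).div_const w using 1
  · funext k
    rw [div_pow, pow_succ, div_div]
  · field_simp

theorem hasSum_exp_neg_mul_div_exp_sub {z : ℂ} (hz : ‖z‖ < 1) (a : ℝ) {t : ℝ} (ht : 0 < t) :
    HasSum (fun k : ℕ => z ^ k * rexp (-((k : ℝ) + 1 + a) * t))
      (rexp (-(a * t)) / (rexp t - z)) := by
  have hzt : ‖z‖ < ‖(rexp t : ℂ)‖ := by
    rw [Complex.norm_real, norm_of_nonneg (exp_pos t).le]
    exact hz.trans (one_lt_exp_iff.mpr ht)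
  rw [div_eq_mul_inv]
  refine ((hasSum_pow_div_pow_succ hzt).mul_left (rexp (-(a * t)) : ℂ)).congr_fun fun k => ?_
  have hexp : rexp (-((k : ℝ) + 1 + a) * t) = rexp (-(a * t)) / rexp t ^ (k + 1) := by
    rw [← exp_nat_mul, ← exp_sub]
    push_cast
    ring_nf
  push_cast [hexp]
  ring

theorem hasSum_mellin_exp_neg_mul_div_exp_sub {a b : ℝ} (ha : -1 < a) (hb : 0 < b) {z : ℂ}
    (hz : ‖z‖ < 1) :
    HasSum (fun k : ℕ => Gamma b * z ^ k / ((((k : ℝ) + 1 + a) ^ b : ℝ) : ℂ))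
      (mellin (fun t => (rexp (-(a * t)) : ℂ) / (rexp t - z)) b) := by
  have hp (k : ℕ) : 0 < (k : ℝ) + 1 + a := by linarith [k.cast_nonneg (α := ℝ)]
  have hsum : Summable fun k : ℕ => ‖z ^ k‖ / ((k : ℝ) + 1 + a) ^ (b : ℂ).re := by
    refine Summable.of_nonneg_of_le (fun k => by have := hp k; positivity) (fun k => ?_)
      ((summable_geometric_of_lt_one (norm_nonneg z) hz).div_const ((1 + a) ^ b))
    rw [Complex.ofReal_re, norm_pow]
    have : 0 < 1 + a := by linarith
    gcongr
    linarith [k.cast_nonneg (α := ℝ)]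
  convert hasSum_mellin (fun k => Or.inr (hp k)) (by simpa using hb)
    (fun t ht => hasSum_exp_neg_mul_div_exp_sub hz a ht) hsum using 2 with k
  rw [Complex.Gamma_ofReal, Complex.ofReal_cpow (hp k).le]

theorem integral_comp_exp_sub_one_Ioi {E : Type*} [NormedAddCommGroup E] [NormedSpace ℝ E]
    (g : ℝ → E) : ∫ u in Ioi 0, rexp u • g (rexp u - 1) = ∫ t in Ioi 0, g t := by
  have himage : (fun u => rexp u - 1) '' Ioi 0 = Ioi 0 := by
    rw [← image_image (fun x => x - 1) rexp, image_exp_Ioi, exp_zero, image_sub_const_Ioi,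
      sub_self]
  have := integral_image_eq_integral_abs_deriv_smul (measurableSet_Ioi (a := (0 : ℝ)))
    (fun u _ => ((hasDerivAt_exp u).sub_const 1).hasDerivWithinAt)
    (fun x _ y _ h => exp_injective (sub_left_injective h)) g
  rw [himage] at this
  simpa [abs_of_pos (exp_pos _)] using this.symm

theorem integral_log_one_add_rpow_div_eq_mellin (a b : ℝ) (z : ℂ) :
    ∫ t in Ioi (0 : ℝ),
        ((log (1 + t) ^ (b - 1) / (1 + t) ^ (a + 1) : ℝ) : ℂ) / ((t : ℂ) - (z - 1)) =
      mellin (fun u => (rexp (-(a * u)) : ℂ) / (rexp u - z)) b := by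
  rw [← integral_comp_exp_sub_one_Ioi, mellin]
  refine setIntegral_congr_fun measurableSet_Ioi fun u (hu : 0 < u) => ?_
  have hreal : rexp u * (log (1 + (rexp u - 1)) ^ (b - 1) / (1 + (rexp u - 1)) ^ (a + 1)) =
      u ^ (b - 1) * rexp (-(a * u)) := by
    rw [add_sub_cancel, log_exp, ← exp_mul, mul_div_left_comm, ← exp_sub]
    ring_nf
  rw [Complex.real_smul, ← mul_div_assoc, ← Complex.ofReal_mul, hreal, Complex.ofReal_mul,
    Complex.ofReal_cpow hu.le, Complex.ofReal_sub, Complex.ofReal_one, smul_eq_mul,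
    Complex.ofReal_sub, Complex.ofReal_one, sub_sub_sub_cancel_right, mul_div_assoc]

theorem stmt1 (a b : ℝ) (ha : 0 < a) (hb : 0 < b) (z : ℂ) (hz : ‖z‖ < 1) :
    ∑' k : ℕ, z ^ (k + 1) / ((((k : ℝ) + 1 + a) ^ b : ℝ) : ℂ) =
      z / (Real.Gamma b : ℂ) *
        ∫ t in Ioi (0 : ℝ),
          ((Real.log (1 + t) ^ (b - 1) / (1 + t) ^ (a + 1) : ℝ) : ℂ) /
            ((t : ℂ) - (z - 1)) := by
  have hΓ : (Gamma b : ℂ) ≠ 0 := Complex.ofReal_ne_zero.mpr (Gamma_pos_of_pos hb).ne'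
  rw [integral_log_one_add_rpow_div_eq_mellin,
    ← (hasSum_mellin_exp_neg_mul_div_exp_sub (by linarith) hb hz).tsum_eq, ← tsum_mul_left]
  refine tsum_congr fun k => ?_
  rw [pow_succ', mul_div_assoc, mul_div_assoc, ← mul_assoc, div_mul_cancel₀ _ hΓ]
end

section
/- Let F be a function analytic in a neighborhood of [0,∞) in ℂ with |F(p)| ≤ C(1+|p|)^m for some constants C, m on its domain, and suppose the Taylor coefficients c_k = ∫₀^∞ e^{-kp} F(p) dp for k ≥ 1 (with F real-integrable on (0,∞)). Then for |z| < 1, ∑_{k=1}^∞ c_k z^k = z ∫₀^∞ F(ln(1+s)) / ((1+s)(1+s-z)) ds. -/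
open MeasureTheory Set Real

/-! Writing `c (k + 1) z ^ (k + 1) = ∫ (z e^{-p}) ^ (k + 1) F(p) dp` and using
`‖z e^{-p}‖ ≤ ‖z‖ < 1` for `p ≥ 0`, the integrals of the norms are dominated by a geometric
series times `∫ ‖F‖`, so sum and integral commute and the integrand sums to
`z e^{-p} / (1 - z e^{-p}) F(p)`. The substitution `p = log (1 + s)` turns this into the
stated integral. -/

theorem hasSum_integral_pow_succ_mul {α 𝕜 : Type*} [MeasurableSpace α] {μ : Measure α}
    [RCLike 𝕜] {w f : α → 𝕜} {r : ℝ} (hr₀ : 0 ≤ r) (hr : r < 1) (hw : AEStronglyMeasurable w μ)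
    (hwr : ∀ᵐ a ∂μ, ‖w a‖ ≤ r) (hf : Integrable f μ) :
    HasSum (fun k : ℕ => ∫ a, w a ^ (k + 1) * f a ∂μ) (∫ a, w a / (1 - w a) * f a ∂μ) := by
  have hpow_le (k : ℕ) : ∀ᵐ a ∂μ, ‖w a ^ (k + 1)‖ ≤ r ^ (k + 1) := by
    filter_upwards [hwr] with a ha
    rw [norm_pow]
    exact pow_le_pow_left₀ (norm_nonneg _) ha _
  have hint (k : ℕ) : Integrable (fun a => w a ^ (k + 1) * f a) μ :=
    hf.bdd_mul (hw.pow _) (hpow_le k)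
  have hnorm_le (k : ℕ) : ∫ a, ‖w a ^ (k + 1) * f a‖ ∂μ ≤ r ^ (k + 1) * ∫ a, ‖f a‖ ∂μ := by
    rw [← integral_const_mul]
    refine integral_mono_ae (hint k).norm (hf.norm.const_mul _) ?_
    filter_upwards [hpow_le k] with a ha
    rw [norm_mul]
    exact mul_le_mul_of_nonneg_right ha (norm_nonneg _)
  have hsum : Summable fun k : ℕ => ∫ a, ‖w a ^ (k + 1) * f a‖ ∂μ :=
    Summable.of_nonneg_of_le (fun k => integral_nonneg fun a => norm_nonneg _) hnorm_le
      (((summable_geometric_of_lt_one hr₀ hr).comp_injective (add_left_injective 1)).mul_right _)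
  have hlim : ∫ a, (∑' k : ℕ, w a ^ (k + 1) * f a) ∂μ = ∫ a, w a / (1 - w a) * f a ∂μ := by
    refine integral_congr_ae ?_
    filter_upwards [hwr] with a ha
    have hgeom := (hasSum_geometric_of_norm_lt_one (ha.trans_lt hr)).mul_left (w a)
    simp only [← pow_succ'] at hgeom
    rw [(hgeom.mul_right (f a)).tsum_eq, div_eq_mul_inv]
  exact hlim ▸ hasSum_integral_of_summable_integral_norm hint hsum

theorem integral_Ioi_comp_log_one_add {E : Type*} [NormedAddCommGroup E] [NormedSpace ℝ E]
    (g : ℝ → E) : ∫ s in Ioi 0, (1 + s)⁻¹ • g (log (1 + s)) = ∫ p in Ioi 0, g p := by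
  rw [← log_one, ← integral_comp_log_Ioi g one_pos, ← add_zero (1 : ℝ), ← image_const_add_Ioi,
    (measurePreserving_add_left volume 1).setIntegral_image_emb (measurableEmbedding_addLeft 1)]
  simp

theorem Complex.norm_mul_exp_neg_ofReal_le (z : ℂ) {p : ℝ} (hp : 0 ≤ p) :
    ‖z * Complex.exp (-(p : ℂ))‖ ≤ ‖z‖ := by
  rw [norm_mul, ← Complex.ofReal_neg, ← Complex.ofReal_exp, Complex.norm_real,
    norm_of_nonneg (exp_nonneg _)]
  exact mul_le_of_le_one_right (norm_nonneg z) (exp_le_one_iff.2 (neg_nonpos.2 hp))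

theorem inv_smul_div_one_sub_mul_exp_neg_log {x : ℝ} (hx : 0 < x) {z : ℂ} (hxz : (x : ℂ) ≠ z)
    (v : ℂ) :
    x⁻¹ • (z * Complex.exp (-(log x : ℂ)) / (1 - z * Complex.exp (-(log x : ℂ))) * v) =
      z * (v / ((x : ℂ) * ((x : ℂ) - z))) := by
  have hx' : (x : ℂ) ≠ 0 := Complex.ofReal_ne_zero.2 hx.ne'
  have hxz' : (x : ℂ) - z ≠ 0 := sub_ne_zero.2 hxz
  rw [← Complex.ofReal_neg, ← Complex.ofReal_exp, exp_neg, exp_log hx, Complex.real_smul]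
  push_cast
  field_simp

theorem stmt4_general (F : ℂ → ℂ)
    (hint : IntegrableOn (fun p : ℝ => F p) (Ioi 0))
    (c : ℕ → ℂ)
    (hc : ∀ k : ℕ, 1 ≤ k → c k = ∫ p in Ioi (0 : ℝ), Complex.exp (-(k : ℂ) * p) * F p)
    (z : ℂ) (hz : ‖z‖ < 1) :
    ∑' k : ℕ, c (k + 1) * z ^ (k + 1) =
      z * ∫ s in Ioi (0 : ℝ),
        F (Real.log (1 + s)) / (((1 + s : ℝ) : ℂ) * (((1 + s : ℝ) : ℂ) - z)) := by
  have hterm (k : ℕ) :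
      c (k + 1) * z ^ (k + 1) =
        ∫ p in Ioi (0 : ℝ), (z * Complex.exp (-(p : ℂ))) ^ (k + 1) * F p := by
    rw [hc (k + 1) k.succ_pos, ← integral_mul_const]
    congr 1 with p
    rw [mul_pow, ← Complex.exp_nat_mul]
    push_cast
    ring_nf
  have hw : ∀ᵐ p : ℝ ∂volume.restrict (Ioi 0), ‖z * Complex.exp (-(p : ℂ))‖ ≤ ‖z‖ := by
    filter_upwards [ae_restrict_mem measurableSet_Ioi] with p hp
    exact z.norm_mul_exp_neg_ofReal_le hp.le
  rw [tsum_congr hterm, (hasSum_integral_pow_succ_mul (norm_nonneg z) hz (by fun_prop) hw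
    hint).tsum_eq, ← integral_Ioi_comp_log_one_add, ← integral_const_mul]
  refine setIntegral_congr_fun measurableSet_Ioi fun s hs => ?_
  have h1s : 1 < 1 + s := lt_add_of_pos_right 1 hs
  refine inv_smul_div_one_sub_mul_exp_neg_log (by linarith) (fun h => ?_) _
  rw [← h, Complex.norm_real, norm_of_nonneg (by linarith)] at hz
  linarith

theorem stmt4 (F : ℂ → ℂ) (U : Set ℂ) (hU : IsOpen U)
    (hsub : {z : ℂ | z.im = 0 ∧ 0 ≤ z.re} ⊆ U)
    (hF : AnalyticOnNhd ℂ F U)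
    (C : ℝ) (m : ℕ) (hbound : ∀ z ∈ U, ‖F z‖ ≤ C * (1 + ‖z‖) ^ m)
    (hint : IntegrableOn (fun p : ℝ => F p) (Ioi 0))
    (c : ℕ → ℂ)
    (hc : ∀ k : ℕ, 1 ≤ k → c k = ∫ p in Ioi (0 : ℝ), Complex.exp (-(k : ℂ) * p) * F p)
    (z : ℂ) (hz : ‖z‖ < 1) :
    ∑' k : ℕ, c (k + 1) * z ^ (k + 1) =
      z * ∫ s in Ioi (0 : ℝ),
        F (Real.log (1 + s)) / (((1 + s : ℝ) : ℂ) * (((1 + s : ℝ) : ℂ) - z)) :=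
  stmt4_general F hint c hc z hz
end

section
/- Let s₁ : [1,∞) → (0,1] and s₂ : [1,∞) → [1,∞) be the inverse functions of s - ln s restricted to (0,1] and [1,∞) respectively. Then for every natural n ≥ 1, n! = n^{n+1} e^{-n} ∫₀^∞ e^{-np} (s₂'(1+p) - s₁'(1+p)) dp. -/
/-!
Substituting `x = n s` in Euler's integral gives `n! / n ^ (n + 1) = ∫₀^∞ e^{-n (s - ln s)} ds`.
The function `s - ln s` has its minimum `1` at `s = 1`, decreases on `(0, 1)` and increases on
`(1, ∞)`. Substituting `s = s₁ t` on `(0, 1)` and `s = s₂ t` on `(1, ∞)` turns both pieces into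
integrals of `e^{-n t}` over `t > 1`, with Jacobians `|s₁'| = -s₁'` and `|s₂'| = s₂'`; their sum
is `∫₁^∞ e^{-n t} (s₂' t - s₁' t) dt`, and `t = 1 + p` gives the formula.
-/

open MeasureTheory Set Real Nat

variable {E : Type*} [NormedAddCommGroup E] [NormedSpace ℝ E]

section LeftInverse

variable {f g g' : ℝ → ℝ} {S T : Set ℝ}

theorem Set.InjOn.bijOn_of_leftInvOn (hinj : InjOn f S) (hf : MapsTo f S T) (hg : MapsTo g T S)
    (hfg : LeftInvOn f g T) : BijOn g T S :=
  InvOn.bijOn ⟨hfg, hinj.rightInvOn_of_leftInvOn hfg hf hg⟩ hg hf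

theorem hasDerivAt_of_leftInvOn (hS : IsOpen S) (hinj : InjOn f S) (hf : MapsTo f S T)
    (hg : MapsTo g T S) (hfg : LeftInvOn f g T) {t d : ℝ} (ht : t ∈ T)
    (hd : HasStrictDerivAt f d (g t)) (hd₀ : d ≠ 0) : HasDerivAt g d⁻¹ t := by
  have hgf : ∀ᶠ x in nhds (g t), g (f x) = x :=
    Filter.eventually_of_mem (hS.mem_nhds (hg ht)) (hinj.rightInvOn_of_leftInvOn hfg hf hg)
  simpa only [hfg ht] using (hd.to_local_left_inverse hd₀ hgf).hasDerivAt

theorem integral_comp_eq_integral_abs_deriv_smul_of_leftInvOn (hT : MeasurableSet T)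
    (hinj : InjOn f S) (hf : MapsTo f S T) (hg : MapsTo g T S) (hfg : LeftInvOn f g T)
    (hg' : ∀ t ∈ T, HasDerivAt g (g' t) t) (u : ℝ → E) :
    ∫ x in S, u (f x) = ∫ t in T, |g' t| • u t := by
  have hbij := hinj.bijOn_of_leftInvOn hf hg hfg
  rw [← hbij.image_eq, integral_image_eq_integral_abs_deriv_smul hT
    (fun t ht => (hg' t ht).hasDerivWithinAt) hbij.injOn]
  exact setIntegral_congr_fun hT fun t ht => by rw [hfg ht]

theorem integrableOn_comp_iff_integrableOn_abs_deriv_smul_of_leftInvOn (hT : MeasurableSet T)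
    (hinj : InjOn f S) (hf : MapsTo f S T) (hg : MapsTo g T S) (hfg : LeftInvOn f g T)
    (hg' : ∀ t ∈ T, HasDerivAt g (g' t) t) (u : ℝ → E) :
    IntegrableOn (fun x => u (f x)) S ↔ IntegrableOn (fun t => |g' t| • u t) T := by
  have hbij := hinj.bijOn_of_leftInvOn hf hg hfg
  rw [← hbij.image_eq, integrableOn_image_iff_integrableOn_abs_deriv_smul hT
    (fun t ht => (hg' t ht).hasDerivWithinAt) hbij.injOn]
  exact integrableOn_congr_fun (fun t ht => by simp only [hfg ht]) hT

end LeftInverse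

theorem integral_Ioi_eq_integral_Ioi_zero_comp_add (a : ℝ) (u : ℝ → E) :
    ∫ t in Ioi a, u t = ∫ p in Ioi 0, u (a + p) := by
  simpa only [image_const_add_Ioi, add_zero, abs_one, one_smul] using
    integral_image_eq_integral_abs_deriv_smul (s := Ioi 0) measurableSet_Ioi
    (fun p _ => ((hasDerivAt_id' p).const_add a).hasDerivWithinAt) (add_right_injective a).injOn u

theorem integral_Ioi_eq_integral_Ioo_add_integral_Ioi {u : ℝ → E} {a b : ℝ} (hab : a ≤ b)
    (hu : IntegrableOn u (Ioi a)) :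
    ∫ x in Ioi a, u x = (∫ x in Ioo a b, u x) + ∫ x in Ioi b, u x := by
  rw [← intervalIntegral.integral_interval_add_Ioi hu (hu.mono_set (Ioi_subset_Ioi hab)),
    intervalIntegral.integral_of_le hab, integral_Ioc_eq_integral_Ioo]

theorem integral_pow_mul_exp_neg_mul_Ioi (n : ℕ) {r : ℝ} (hr : 0 < r) :
    ∫ x in Ioi 0, x ^ n * exp (-(r * x)) = n ! / r ^ (n + 1) := by
  have h := integral_rpow_mul_exp_neg_mul_Ioi (a := n + 1) (by positivity) hr
  rw [add_sub_cancel_right, Gamma_nat_eq_factorial, ← Nat.cast_succ, rpow_natCast, div_pow,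
    one_pow] at h
  simpa only [rpow_natCast, div_mul_eq_mul_div, one_mul] using h

theorem integrableOn_pow_mul_exp_neg_mul_Ioi (n : ℕ) {r : ℝ} (hr : 0 < r) :
    IntegrableOn (fun x => x ^ n * exp (-(r * x))) (Ioi 0) := by
  simpa only [rpow_one, rpow_natCast, neg_mul] using
    integrableOn_rpow_mul_exp_neg_mul_rpow (s := n) (by linarith [n.cast_nonneg (α := ℝ)])
      one_pos hr

theorem hasStrictDerivAt_sub_log {s : ℝ} (hs : 0 < s) :
    HasStrictDerivAt (fun x => x - Real.log x) (1 - s⁻¹) s :=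
  (hasStrictDerivAt_id s).sub (hasStrictDerivAt_log hs.ne')

theorem one_lt_sub_log {s : ℝ} (hs : 0 < s) (hs₁ : s ≠ 1) : 1 < s - Real.log s := by
  linarith [log_lt_sub_one_of_pos hs hs₁]

theorem ne_one_of_sub_log_eq {s t : ℝ} (ht : 1 < t) (h : s - Real.log s = t) : s ≠ 1 := by
  rintro rfl
  simp only [Real.log_one, sub_zero] at h
  exact ht.ne h

theorem exp_neg_mul_sub_log (n : ℕ) {x : ℝ} (hx : 0 < x) :
    exp (-(n * (x - Real.log x))) = x ^ n * exp (-(n * x)) := by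
  rw [show -(n * (x - Real.log x)) = n * Real.log x + -(n * x) by ring, exp_add, exp_nat_mul,
    exp_log hx]

theorem continuousOn_sub_log : ContinuousOn (fun x => x - Real.log x) (Ioi 0) :=
  fun _ hx => (hasStrictDerivAt_sub_log hx).hasDerivAt.continuousAt.continuousWithinAt

theorem strictAntiOn_sub_log : StrictAntiOn (fun x => x - Real.log x) (Ioc 0 1) := by
  refine strictAntiOn_of_deriv_neg (convex_Ioc 0 1)
    (continuousOn_sub_log.mono Ioc_subset_Ioi_self) fun x hx => ?_
  rw [interior_Ioc] at hx
  rw [(hasStrictDerivAt_sub_log hx.1).hasDerivAt.deriv, sub_neg]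
  exact (one_lt_inv₀ hx.1).2 hx.2

theorem strictMonoOn_sub_log : StrictMonoOn (fun x => x - Real.log x) (Ici 1) := by
  refine strictMonoOn_of_deriv_pos (convex_Ici 1)
    (continuousOn_sub_log.mono (Ici_subset_Ioi.2 one_pos)) fun x hx => ?_
  rw [interior_Ici] at hx
  rw [(hasStrictDerivAt_sub_log (one_pos.trans hx)).hasDerivAt.deriv, sub_pos]
  exact inv_lt_one_of_one_lt₀ hx

theorem hasDerivAt_of_leftInvOn_sub_log {g : ℝ → ℝ} {S : Set ℝ} (hS : IsOpen S)
    (hS₀ : S ⊆ Ioi 0) (hS₁ : 1 ∉ S) (hinj : InjOn (fun x => x - Real.log x) S)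
    (hg : MapsTo g (Ioi 1) S) (hfg : LeftInvOn (fun x => x - Real.log x) g (Ioi 1)) {t : ℝ}
    (ht : t ∈ Ioi 1) : HasDerivAt g (1 - (g t)⁻¹)⁻¹ t := by
  have hgt₁ : g t ≠ 1 := ne_of_mem_of_not_mem (hg ht) hS₁
  refine hasDerivAt_of_leftInvOn hS hinj (fun x hx => ?_) hg hfg ht
    (hasStrictDerivAt_sub_log (hS₀ (hg ht))) (sub_ne_zero.2 (inv_ne_one.2 hgt₁).symm)
  exact one_lt_sub_log (hS₀ hx) (ne_of_mem_of_not_mem hx hS₁)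

theorem integral_comp_sub_log_eq {s₁ s₂ : ℝ → ℝ} (hs₁ : MapsTo s₁ (Ioi 1) (Ioo 0 1))
    (hs₂ : MapsTo s₂ (Ioi 1) (Ioi 1)) (h₁ : LeftInvOn (fun x => x - Real.log x) s₁ (Ioi 1))
    (h₂ : LeftInvOn (fun x => x - Real.log x) s₂ (Ioi 1)) {u : ℝ → E}
    (hu : IntegrableOn (fun x => u (x - Real.log x)) (Ioi 0)) :
    ∫ x in Ioi 0, u (x - Real.log x) = ∫ t in Ioi 1, (deriv s₂ t - deriv s₁ t) • u t := by
  have hinj₁ := strictAntiOn_sub_log.injOn.mono Ioo_subset_Ioc_self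
  have hinj₂ := strictMonoOn_sub_log.injOn.mono Ioi_subset_Ici_self
  have hf₁ : MapsTo (fun x => x - Real.log x) (Ioo 0 1) (Ioi 1) :=
    fun x hx => one_lt_sub_log hx.1 hx.2.ne
  have hf₂ : MapsTo (fun x => x - Real.log x) (Ioi 1) (Ioi 1) :=
    fun x hx => one_lt_sub_log (one_pos.trans hx) (ne_of_gt hx)
  have hd₁ (t : ℝ) (ht : t ∈ Ioi 1) : HasDerivAt s₁ (1 - (s₁ t)⁻¹)⁻¹ t :=
    hasDerivAt_of_leftInvOn_sub_log isOpen_Ioo (fun x hx => hx.1) (fun h => h.2.false)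
      hinj₁ hs₁ h₁ ht
  have hd₂ (t : ℝ) (ht : t ∈ Ioi 1) : HasDerivAt s₂ (1 - (s₂ t)⁻¹)⁻¹ t :=
    hasDerivAt_of_leftInvOn_sub_log isOpen_Ioi (Ioi_subset_Ioi zero_le_one) (lt_irrefl (1 : ℝ))
      hinj₂ hs₂ h₂ ht
  have hint₁ := (integrableOn_comp_iff_integrableOn_abs_deriv_smul_of_leftInvOn measurableSet_Ioi
    hinj₁ hf₁ hs₁ h₁ hd₁ u).1 (hu.mono_set Ioo_subset_Ioi_self)
  have hint₂ := (integrableOn_comp_iff_integrableOn_abs_deriv_smul_of_leftInvOn measurableSet_Ioi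
    hinj₂ hf₂ hs₂ h₂ hd₂ u).1 (hu.mono_set (Ioi_subset_Ioi zero_le_one))
  calc ∫ x in Ioi 0, u (x - Real.log x)
      = (∫ x in Ioo 0 1, u (x - Real.log x)) + ∫ x in Ioi 1, u (x - Real.log x) :=
        integral_Ioi_eq_integral_Ioo_add_integral_Ioi zero_le_one hu
    _ = ∫ t in Ioi 1, |(1 - (s₁ t)⁻¹)⁻¹| • u t + |(1 - (s₂ t)⁻¹)⁻¹| • u t := by
        rw [integral_comp_eq_integral_abs_deriv_smul_of_leftInvOn measurableSet_Ioi hinj₁ hf₁ hs₁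
          h₁ hd₁, integral_comp_eq_integral_abs_deriv_smul_of_leftInvOn measurableSet_Ioi hinj₂ hf₂
          hs₂ h₂ hd₂, integral_add hint₁ hint₂]
    _ = ∫ t in Ioi 1, (deriv s₂ t - deriv s₁ t) • u t := by
        refine setIntegral_congr_fun measurableSet_Ioi fun t ht => ?_
        have hneg : (1 - (s₁ t)⁻¹)⁻¹ < 0 :=
          inv_lt_zero.2 (sub_neg.2 ((one_lt_inv₀ (hs₁ ht).1).2 (hs₁ ht).2))
        have hpos : 0 < (1 - (s₂ t)⁻¹)⁻¹ := inv_pos.2 (sub_pos.2 (inv_lt_one_of_one_lt₀ (hs₂ ht)))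
        rw [(hd₁ t ht).deriv, (hd₂ t ht).deriv, abs_of_neg hneg, abs_of_pos hpos, sub_smul,
          neg_smul]
        abel

theorem stmt8 (s₁ s₂ : ℝ → ℝ)
    (h₁ : ∀ t ∈ Ici (1 : ℝ), s₁ t ∈ Ioc (0 : ℝ) 1 ∧ s₁ t - Real.log (s₁ t) = t)
    (h₂ : ∀ t ∈ Ici (1 : ℝ), s₂ t ∈ Ici (1 : ℝ) ∧ s₂ t - Real.log (s₂ t) = t)
    (n : ℕ) (hn : 1 ≤ n) :
    (n ! : ℝ) = (n : ℝ) ^ (n + 1) * Real.exp (-(n : ℝ)) *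
      ∫ p in Ioi (0 : ℝ),
        Real.exp (-(n : ℝ) * p) * (deriv s₂ (1 + p) - deriv s₁ (1 + p)) := by
  have hn₀ : (0 : ℝ) < n := by exact_mod_cast hn
  have hs₁ : MapsTo s₁ (Ioi 1) (Ioo 0 1) := fun t ht =>
    have ⟨⟨hpos, hle⟩, heq⟩ := h₁ t (Ioi_subset_Ici_self ht)
    ⟨hpos, hle.lt_of_ne (ne_one_of_sub_log_eq ht heq)⟩
  have hs₂ : MapsTo s₂ (Ioi 1) (Ioi 1) := fun t ht =>
    have ⟨hge, heq⟩ := h₂ t (Ioi_subset_Ici_self ht)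
    hge.lt_of_ne' (ne_one_of_sub_log_eq ht heq)
  have hexp : EqOn (fun x => exp (-(n * (x - Real.log x)))) (fun x => x ^ n * exp (-(n * x)))
      (Ioi 0) := fun x hx => exp_neg_mul_sub_log n hx
  have hsubst := integral_comp_sub_log_eq hs₁ hs₂ (fun t ht => (h₁ t (Ioi_subset_Ici_self ht)).2)
    (fun t ht => (h₂ t (Ioi_subset_Ici_self ht)).2) (u := fun t => exp (-(n * t)))
    ((integrableOn_pow_mul_exp_neg_mul_Ioi n hn₀).congr_fun hexp.symm measurableSet_Ioi)
  rw [setIntegral_congr_fun measurableSet_Ioi hexp, integral_pow_mul_exp_neg_mul_Ioi n hn₀,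
    integral_Ioi_eq_integral_Ioi_zero_comp_add 1, div_eq_iff (by positivity)] at hsubst
  rw [hsubst, mul_assoc, ← integral_const_mul, mul_comm]
  congr 1
  refine setIntegral_congr_fun measurableSet_Ioi fun p _ => ?_
  rw [smul_eq_mul, mul_add, mul_one, neg_add, exp_add, neg_mul]
  ring
end

section
/- For every natural n ≥ 1, ln Γ(n) = n(ln n − 1) − (1/2) ln n + (1/2) ln(2π) + ∫₀^∞ [ (1 − p/2 − (p/2 + 1)e^{-p}) / (p²(e^{-p} − 1)) ] e^{-np} dp. -/
open MeasureTheory Set Real Filter Topology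

/-!
Write `I x = ∫₀^∞ K p e^{-x p} dp`, where `K p = (1/2 - 1/p + 1/(e^p - 1)) / p` is Binet's kernel.
Since `0 ≤ K ≤ 1`, we get `|I x| ≤ 1/x`. Integrating by parts and evaluating the remaining term as
a Frullani integral gives `I (x + 1) - I x = 1 - (x + 1/2) log ((x + 1) / x)`; by
`Γ (x + 1) = x Γ x`, this is also the increment of `log Γ x - S x`, where
`S x = x (log x - 1) - (1/2) log x + (1/2) log (2π)`. So `log Γ - S - I` is `1`-periodic on
`(0, ∞)`. Along the integers it tends to `0` by Stirling's formula, hence it vanishes there.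
-/

lemma hasDerivAt_exp_neg_mul (c x : ℝ) :
    HasDerivAt (fun p => exp (-c * p)) (-c * exp (-c * x)) x := by
  simpa [mul_comm] using ((hasDerivAt_id x).const_mul (-c)).exp

lemma tendsto_exp_neg_mul_atTop {c : ℝ} (hc : 0 < c) :
    Tendsto (fun p => exp (-c * p)) atTop (𝓝 0) := by
  refine (tendsto_exp_neg_atTop_nhds_zero.comp (tendsto_id.const_mul_atTop hc)).congr fun p => ?_
  simp

lemma integrableOn_exp_neg_mul_Ioi {c : ℝ} (hc : 0 < c) :
    IntegrableOn (fun p => exp (-c * p)) (Ioi 0) :=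
  integrableOn_exp_mul_Ioi (neg_lt_zero.2 hc) 0

lemma integral_exp_neg_mul_Ioi {c : ℝ} (hc : 0 < c) :
    ∫ p in Ioi 0, exp (-c * p) = c⁻¹ := by
  rw [integral_exp_mul_Ioi (neg_lt_zero.2 hc) 0]
  simp

lemma exp_neg_mul_sub_exp_neg_mul_le (a b p : ℝ) :
    exp (-a * p) - exp (-b * p) ≤ (b - a) * p * exp (-a * p) := by
  have h := add_one_le_exp (-(b - a) * p)
  have e : exp (-b * p) = exp (-a * p) * exp (-(b - a) * p) := by rw [← exp_add]; ring_nf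
  nlinarith [exp_pos (-a * p)]

lemma antitoneOn_one_add_mul_exp_neg : AntitoneOn (fun t : ℝ => (1 + t) * exp (-t)) (Ici 0) := by
  intro s hs t _ hst
  have h := add_one_le_exp (t - s)
  have e : exp (-s) = exp (t - s) * exp (-t) := by rw [← exp_add]; ring_nf
  have hs : 0 ≤ s := hs
  have key : 1 + t ≤ (1 + s) * exp (t - s) := by
    nlinarith [mul_le_mul_of_nonneg_left h (by linarith : 0 ≤ 1 + s),
      mul_nonneg hs (sub_nonneg.2 hst)]
  simp only [e, ← mul_assoc]
  exact mul_le_mul_of_nonneg_right key (exp_pos _).le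

lemma nonneg_of_hasDerivAt_of_nonneg {g g' : ℝ → ℝ} (hg : ∀ x, HasDerivAt g (g' x) x)
    (hg0 : g 0 = 0) (hg' : ∀ x, 0 < x → 0 ≤ g' x) {p : ℝ} (hp : 0 ≤ p) : 0 ≤ g p := by
  have hmono : MonotoneOn g (Ici 0) :=
    monotoneOn_of_hasDerivWithinAt_nonneg (convex_Ici 0)
      (fun x _ => (hg x).continuousAt.continuousWithinAt)
      (fun x _ => (hg x).hasDerivWithinAt) (by simpa using hg')
  simpa [hg0] using hmono self_mem_Ici (mem_Ici.2 hp) hp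

lemma two_sub_mul_exp_le_two_add {p : ℝ} (hp : 0 ≤ p) : (2 - p) * exp p ≤ 2 + p := by
  have hderiv (x : ℝ) :
      HasDerivAt (fun q => 2 + q - (2 - q) * exp q) (1 - (1 - x) * exp x) x :=
    (((hasDerivAt_id x).const_add 2).sub
      (((hasDerivAt_id x).const_sub 2).mul (hasDerivAt_exp x))).congr_deriv (by simp; ring)
  have hderiv_nonneg (x : ℝ) : 0 ≤ 1 - (1 - x) * exp x := by
    have h := add_one_le_exp (-x)
    have e : exp (-x) * exp x = 1 := by rw [← exp_add]; simp
    nlinarith [exp_pos x]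
  simpa using nonneg_of_hasDerivAt_of_nonneg hderiv (by simp) (fun x _ => hderiv_nonneg x) hp

lemma sq_add_half_add_one_le_mul_exp {p : ℝ} (hp : 0 ≤ p) :
    p ^ 2 + p / 2 + 1 ≤ (p ^ 2 - p / 2 + 1) * exp p := by
  have hquad (c : ℝ) (x : ℝ) : HasDerivAt (fun q => q ^ 2 + c * q + 1) (2 * x + c) x :=
    (((hasDerivAt_pow 2 x).add ((hasDerivAt_id x).const_mul c)).add_const 1).congr_deriv
      (by simp)
  have hderiv (x : ℝ) : HasDerivAt (fun q => (q ^ 2 + (-1 / 2) * q + 1) * exp q -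
      (q ^ 2 + 1 / 2 * q + 1)) ((x ^ 2 + 3 / 2 * x + 1 / 2) * exp x - (2 * x + 1 / 2)) x :=
    (((hquad (-1 / 2) x).mul (hasDerivAt_exp x)).sub (hquad (1 / 2) x)).congr_deriv (by ring)
  have hderiv_nonneg (x : ℝ) (hx : 0 < x) :
      0 ≤ (x ^ 2 + 3 / 2 * x + 1 / 2) * exp x - (2 * x + 1 / 2) := by
    nlinarith [add_one_le_exp x, exp_pos x]
  have h := nonneg_of_hasDerivAt_of_nonneg hderiv (by simp) hderiv_nonneg hp
  linarith

lemma integrableOn_exp_sub_exp_div {a b : ℝ} (ha : 0 < a) (hab : a ≤ b) :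
    IntegrableOn (fun p => (exp (-a * p) - exp (-b * p)) / p) (Ioi 0) := by
  have hmeas : ContinuousOn (fun p => (exp (-a * p) - exp (-b * p)) / p) (Ioi 0) :=
    ContinuousOn.div (by fun_prop) (by fun_prop) fun p hp => (mem_Ioi.1 hp).ne'
  refine Integrable.mono' ((integrableOn_exp_neg_mul_Ioi ha).const_mul (b - a))
    (hmeas.aestronglyMeasurable measurableSet_Ioi) ?_
  refine (ae_restrict_iff' measurableSet_Ioi).2 (ae_of_all _ fun p hp => ?_)
  have hp : 0 < p := hp
  have hle : exp (-b * p) ≤ exp (-a * p) := exp_le_exp.2 (by nlinarith)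
  rw [norm_of_nonneg (div_nonneg (sub_nonneg.2 hle) hp.le), div_le_iff₀ hp]
  nlinarith [exp_neg_mul_sub_exp_neg_mul_le a b p]

lemma integral_exp_sub_exp_div {a b : ℝ} (ha : 0 < a) (hab : a ≤ b) :
    ∫ p in Ioi 0, (exp (-a * p) - exp (-b * p)) / p = log b - log a := by
  have hb : 0 < b := ha.trans_le hab
  have h := Frullani.integral_Ioi_eq (f := fun x => exp (-x)) (L := 1) (R := 0)
    ((by fun_prop : Continuous fun x : ℝ => exp (-x)).locallyIntegrable.locallyIntegrableOn _)
    ha hb ?_ tendsto_exp_neg_atTop_nhds_zero ?_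
  · rw [log_div hb.ne' ha.ne'] at h
    simpa [div_eq_inv_mul] using h
  · simpa using ((by fun_prop : Continuous fun x : ℝ => exp (-x)).tendsto 0).mono_left
      nhdsWithin_le_nhds
  · simpa [div_eq_inv_mul] using integrableOn_exp_sub_exp_div ha hab

lemma integrableOn_and_integral_one_add_mul_exp_sub_div_sq {a b : ℝ} (ha : 0 < a)
    (hab : a ≤ b) :
    IntegrableOn (fun x => ((1 + a * x) * exp (-a * x) - (1 + b * x) * exp (-b * x)) / x ^ 2)
        (Ioi 0) ∧
      ∫ x in Ioi 0, ((1 + a * x) * exp (-a * x) - (1 + b * x) * exp (-b * x)) / x ^ 2 =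
        b - a := by
  -- the antiderivative is `(e^{-b x} - e^{-a x}) / x`, continued at `0` by its limit `a - b`
  set g : ℝ → ℝ := fun p => exp (-b * p) - exp (-a * p)
  have hg (x : ℝ) : HasDerivAt g (-b * exp (-b * x) - -a * exp (-a * x)) x :=
    (hasDerivAt_exp_neg_mul b x).sub (hasDerivAt_exp_neg_mul a x)
  have hW0 : dslope g 0 0 = a - b := by
    rw [dslope_same, (hg 0).deriv]; simp; ring
  have hcont : ContinuousWithinAt (dslope g 0) (Ici 0) 0 :=
    (continuousAt_dslope_same.2 (hg 0).differentiableAt).continuousWithinAt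
  have hderiv : ∀ x ∈ Ioi (0 : ℝ), HasDerivAt (dslope g 0)
      (((1 + a * x) * exp (-a * x) - (1 + b * x) * exp (-b * x)) / x ^ 2) x := by
    intro x hx
    have hx : x ≠ 0 := (mem_Ioi.1 hx).ne'
    refine (((hg x).div (hasDerivAt_id x) hx).congr_deriv ?_).congr_of_eventuallyEq ?_
    · simp only [g, id]; field_simp; ring
    · filter_upwards [eventually_ne_nhds hx] with p hp
      simp [dslope_of_ne _ hp, slope_def_field, g]
  have hnonneg : ∀ x ∈ Ioi (0 : ℝ),
      0 ≤ ((1 + a * x) * exp (-a * x) - (1 + b * x) * exp (-b * x)) / x ^ 2 := by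
    intro x hx
    have hx : 0 < x := hx
    have := antitoneOn_one_add_mul_exp_neg (mem_Ici.2 (by positivity : 0 ≤ a * x))
      (mem_Ici.2 (by nlinarith : 0 ≤ b * x)) (by nlinarith : a * x ≤ b * x)
    simp only [← neg_mul] at this
    exact div_nonneg (sub_nonneg.2 this) (sq_nonneg x)
  have htop : Tendsto (dslope g 0) atTop (𝓝 0) := by
    have h := ((tendsto_exp_neg_mul_atTop (ha.trans_le hab)).sub
      (tendsto_exp_neg_mul_atTop ha)).mul tendsto_inv_atTop_zero
    rw [sub_zero, zero_mul] at h
    refine h.congr' ?_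
    filter_upwards [eventually_ne_atTop 0] with p hp
    simp [dslope_of_ne _ hp, slope_def_field, g, div_eq_mul_inv]
  refine ⟨integrableOn_Ioi_deriv_of_nonneg hcont hderiv hnonneg htop, ?_⟩
  rw [integral_Ioi_of_hasDerivAt_of_nonneg hcont hderiv hnonneg htop, hW0]
  ring

noncomputable def binetKernel (p : ℝ) : ℝ :=
  (1 - p / 2 - (p / 2 + 1) * exp (-p)) / (p ^ 2 * (exp (-p) - 1))

noncomputable def binetIntegral (x : ℝ) : ℝ :=
  ∫ p in Ioi 0, binetKernel p * exp (-x * p)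

lemma sq_mul_exp_neg_sub_one_neg {p : ℝ} (hp : 0 < p) : p ^ 2 * (exp (-p) - 1) < 0 :=
  mul_neg_of_pos_of_neg (by positivity) (sub_neg.2 (exp_lt_one_iff.2 (neg_lt_zero.2 hp)))

lemma binetKernel_nonneg {p : ℝ} (hp : 0 < p) : 0 ≤ binetKernel p := by
  refine div_nonneg_of_nonpos ?_ (sq_mul_exp_neg_sub_one_neg hp).le
  have h := two_sub_mul_exp_le_two_add hp.le
  have e : exp (-p) * exp p = 1 := by rw [← exp_add]; simp
  nlinarith [exp_pos (-p)]

lemma binetKernel_le_one {p : ℝ} (hp : 0 < p) : binetKernel p ≤ 1 := by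
  refine (div_le_one_of_neg (sq_mul_exp_neg_sub_one_neg hp)).2 ?_
  have h := sq_add_half_add_one_le_mul_exp hp.le
  have e : exp (-p) * exp p = 1 := by rw [← exp_add]; simp
  nlinarith [exp_pos (-p)]

lemma ae_norm_binetKernel_mul_exp_le (c : ℝ) :
    ∀ᵐ p ∂volume.restrict (Ioi 0), ‖binetKernel p * exp (-c * p)‖ ≤ exp (-c * p) := by
  refine (ae_restrict_iff' measurableSet_Ioi).2 (ae_of_all _ fun p hp => ?_)
  rw [norm_mul, norm_of_nonneg (binetKernel_nonneg hp), norm_of_nonneg (exp_pos _).le]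
  exact mul_le_of_le_one_left (exp_pos _).le (binetKernel_le_one hp)

lemma integrableOn_binetKernel_mul_exp {c : ℝ} (hc : 0 < c) :
    IntegrableOn (fun p => binetKernel p * exp (-c * p)) (Ioi 0) := by
  refine Integrable.mono' (integrableOn_exp_neg_mul_Ioi hc) ?_
    (ae_norm_binetKernel_mul_exp_le c)
  refine ContinuousOn.aestronglyMeasurable ?_ measurableSet_Ioi
  exact (ContinuousOn.div (by fun_prop) (by fun_prop)
    fun p hp => (sq_mul_exp_neg_sub_one_neg hp).ne).mul (by fun_prop)

lemma abs_binetIntegral_le {x : ℝ} (hx : 0 < x) : |binetIntegral x| ≤ x⁻¹ := by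
  rw [← integral_exp_neg_mul_Ioi hx]
  exact norm_integral_le_of_norm_le (integrableOn_exp_neg_mul_Ioi hx)
    (ae_norm_binetKernel_mul_exp_le x)

lemma tendsto_binetIntegral_atTop : Tendsto binetIntegral atTop (𝓝 0) :=
  squeeze_zero_norm' ((eventually_gt_atTop 0).mono fun _ hx => abs_binetIntegral_le hx)
    tendsto_inv_atTop_zero

lemma binetIntegral_add_one_sub {a : ℝ} (ha : 0 < a) :
    binetIntegral (a + 1) - binetIntegral a = 1 - (a + 1 / 2) * (log (a + 1) - log a) := by
  have hab : a ≤ a + 1 := by linarith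
  -- with `b = a + 1`, the `1 / p` terms left by the integration by parts form a Frullani integrand
  obtain ⟨hint, hval⟩ := integrableOn_and_integral_one_add_mul_exp_sub_div_sq ha hab
  have hpt : ∀ p ∈ Ioi (0 : ℝ),
      binetKernel p * exp (-(a + 1) * p) - binetKernel p * exp (-a * p) =
        ((1 + a * p) * exp (-a * p) - (1 + (a + 1) * p) * exp (-(a + 1) * p)) / p ^ 2 -
          (a + 1 / 2) * ((exp (-a * p) - exp (-(a + 1) * p)) / p) := by
    intro p hp
    have hp : 0 < p := hp
    have hexp : exp (-(a + 1) * p) = exp (-a * p) * exp (-p) := by rw [← exp_add]; ring_nf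
    have hexp1 : exp (-p) - 1 ≠ 0 := (sub_neg.2 (exp_lt_one_iff.2 (neg_lt_zero.2 hp))).ne
    rw [binetKernel, hexp]
    field_simp
    ring
  rw [binetIntegral, binetIntegral,
    ← integral_sub (integrableOn_binetKernel_mul_exp (by linarith))
      (integrableOn_binetKernel_mul_exp ha),
    setIntegral_congr_fun measurableSet_Ioi hpt,
    integral_sub hint ((integrableOn_exp_sub_exp_div ha hab).const_mul _), integral_const_mul,
    hval, integral_exp_sub_exp_div ha hab]
  ring

noncomputable def stirlingApprox (x : ℝ) : ℝ :=
  x * (log x - 1) - 1 / 2 * log x + 1 / 2 * log (2 * π)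

lemma log_Gamma_sub_stirlingApprox_add_one {x : ℝ} (hx : 0 < x) :
    (log (Gamma (x + 1)) - stirlingApprox (x + 1)) - (log (Gamma x) - stirlingApprox x) =
      1 - (x + 1 / 2) * (log (x + 1) - log x) := by
  rw [Gamma_add_one hx.ne', log_mul hx.ne' (Gamma_pos_of_pos hx).ne', stirlingApprox,
    stirlingApprox]
  ring

lemma log_Gamma_natCast_sub_stirlingApprox {m : ℕ} (hm : m ≠ 0) :
    log (Gamma m) - stirlingApprox m = log (Stirling.stirlingSeq m) - log √π := by
  obtain ⟨k, rfl⟩ := Nat.exists_eq_succ_of_ne_zero hm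
  have hk : (0 : ℝ) < k + 1 := by positivity
  have hfact : log ((k + 1).factorial : ℝ) = log (k + 1) + log (k.factorial : ℝ) := by
    push_cast [Nat.factorial_succ]
    exact log_mul hk.ne' (by positivity)
  rw [Stirling.log_stirlingSeq_formula, Nat.cast_succ, Gamma_nat_eq_factorial, hfact,
    log_mul two_ne_zero hk.ne', log_div hk.ne' (exp_ne_zero 1), log_exp, log_sqrt pi_pos.le,
    stirlingApprox, log_mul two_ne_zero pi_ne_zero]
  ring

lemma tendsto_log_Gamma_natCast_sub_stirlingApprox :
    Tendsto (fun m : ℕ => log (Gamma m) - stirlingApprox m) atTop (𝓝 0) := by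
  have h := ((continuousAt_log (by positivity)).tendsto.comp
    Stirling.tendsto_stirlingSeq_sqrt_pi).sub_const (log √π)
  rw [sub_self] at h
  refine h.congr' ((eventually_ne_atTop 0).mono fun m hm => ?_)
  exact (log_Gamma_natCast_sub_stirlingApprox hm).symm

lemma eq_zero_of_add_one_eq_of_tendsto {g : ℝ → ℝ} {x : ℝ}
    (hper : ∀ k : ℕ, g (x + k + 1) = g (x + k))
    (hlim : Tendsto (fun k : ℕ => g (x + k)) atTop (𝓝 0)) : g x = 0 := by
  have hconst (k : ℕ) : g (x + k) = g x := by
    induction k with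
    | zero => simp
    | succ k ih => rw [Nat.cast_succ, ← add_assoc, hper, ih]
  exact tendsto_nhds_unique (hlim.congr hconst) tendsto_const_nhds |>.symm

theorem stmt10 (n : ℕ) (hn : 1 ≤ n) :
    Real.log (Real.Gamma n) =
      n * (Real.log n - 1) - (1 / 2) * Real.log n + (1 / 2) * Real.log (2 * π) +
        ∫ p in Ioi (0 : ℝ),
          (1 - p / 2 - (p / 2 + 1) * Real.exp (-p)) / (p ^ 2 * (Real.exp (-p) - 1)) *
            Real.exp (-(n : ℝ) * p) := by
  set g : ℝ → ℝ := fun x => log (Gamma x) - stirlingApprox x - binetIntegral x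
  have hper (k : ℕ) : g (n + k + 1) = g (n + k) := by
    have hx : (0 : ℝ) < n + k := by positivity
    have := log_Gamma_sub_stirlingApprox_add_one hx
    have := binetIntegral_add_one_sub hx
    simp only [g]
    linarith
  have hlim : Tendsto (fun k : ℕ => g (n + k)) atTop (𝓝 0) := by
    have h := (tendsto_log_Gamma_natCast_sub_stirlingApprox.sub
      (tendsto_binetIntegral_atTop.comp tendsto_natCast_atTop_atTop)).comp (tendsto_add_atTop_nat n)
    rw [sub_zero] at h
    refine h.congr fun k => ?_
    simp [g, add_comm]
  have hg := eq_zero_of_add_one_eq_of_tendsto hper hlim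
  simp only [g, stirlingApprox, binetIntegral, binetKernel] at hg
  linarith
end

section
/- For each natural n ≥ 1, 1 − (n + 1/2) ln(1 + 1/n) = ∫₀^∞ e^{-np} (1 − p/2 − (p/2 + 1)e^{-p}) / p² dp. -/
/-!
Since `1 - (x + 1/2) log (1 + 1/x) = ∫_x^{x+1} (u - x - 1/2) / u du` and `1/u = ∫_0^∞ e^{-up} dp`,
the left side is a double integral of `(u - x - 1/2) e^{-up}`, which is absolutely integrable on
`(0, ∞) × (x, x+1]` because it is bounded by a multiple of `e^{-xp}`. Integrating first in `u`
instead produces exactly the kernel `e^{-xp} (1 - p/2 - (p/2 + 1) e^{-p}) / p²`.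
-/

open MeasureTheory Set Real

theorem integral_Ioc_sub_mul_exp_neg_mul (x : ℝ) {p : ℝ} (hp : p ≠ 0) :
    ∫ u in Ioc x (x + 1), (u - (x + 1 / 2)) * exp (-u * p) =
      exp (-x * p) * (1 - p / 2 - (p / 2 + 1) * exp (-p)) / p ^ 2 := by
  have hderiv : ∀ u ∈ uIcc x (x + 1),
      HasDerivAt (fun u ↦ -((u - (x + 1 / 2)) / p + 1 / p ^ 2) * exp (-u * p))
        ((u - (x + 1 / 2)) * exp (-u * p)) u := by
    intro u _
    have hexp : HasDerivAt (fun u ↦ exp (-u * p)) (exp (-u * p) * -p) u := by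
      simpa using ((hasDerivAt_neg u).mul_const p).exp
    have hlin : HasDerivAt (fun u ↦ -((u - (x + 1 / 2)) / p + 1 / p ^ 2)) (-(1 / p)) u :=
      (((hasDerivAt_id u).sub_const _).div_const p).add_const _ |>.neg
    refine (hlin.mul hexp).congr_deriv ?_
    field_simp
    ring
  rw [← intervalIntegral.integral_of_le (by linarith),
    intervalIntegral.integral_eq_sub_of_hasDerivAt hderiv
      ((by fun_prop : Continuous fun u ↦ (u - (x + 1 / 2)) * exp (-u * p)).intervalIntegrable _ _),
    show -(x + 1) * p = -x * p + -p by ring, exp_add]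
  field_simp
  ring

theorem integral_Ioi_sub_mul_exp_neg_mul (c : ℝ) {u : ℝ} (hu : 0 < u) :
    ∫ p in Ioi 0, (u - c) * exp (-u * p) = (u - c) / u := by
  rw [integral_const_mul, integral_exp_mul_Ioi (neg_neg_of_pos hu)]
  field_simp
  simp

theorem integral_sub_div_self {a b : ℝ} (ha : 0 < a) (hb : 0 < b) (c : ℝ) :
    ∫ u in a..b, (u - c) / u = b - a - c * log (b / a) := by
  have hne : ∀ u ∈ uIcc a b, u ≠ 0 := fun u hu ↦ ((lt_min ha hb).trans_le hu.1).ne'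
  rw [intervalIntegral.integral_congr (g := fun u ↦ 1 - c * u⁻¹) fun u hu ↦ by
      field_simp [hne u hu],
    intervalIntegral.integral_sub intervalIntegrable_const
      ((intervalIntegral.intervalIntegrable_inv hne continuousOn_id).const_mul c),
    intervalIntegral.integral_const_mul, integral_inv_of_pos ha hb]
  simp

theorem integrable_sub_mul_exp_neg_mul_prod {a b : ℝ} (ha : 0 < a) (c : ℝ) :
    Integrable (Function.uncurry fun p u ↦ (u - c) * exp (-u * p))
      ((volume.restrict (Ioi 0)).prod (volume.restrict (Ioc a b))) := by
  have hdom : Integrable (fun z : ℝ × ℝ ↦ exp (-a * z.1) * (b - a + |a - c|))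
      ((volume.restrict (Ioi 0)).prod (volume.restrict (Ioc a b))) :=
    (exp_neg_integrableOn_Ioi 0 ha).mul_prod (integrable_const _)
  refine hdom.mono' (by fun_prop) ?_
  rw [Measure.prod_restrict, ae_restrict_iff' (measurableSet_Ioi.prod measurableSet_Ioc)]
  refine .of_forall fun ⟨p, u⟩ ⟨hp, hu⟩ ↦ ?_
  have hu_le : |u - c| ≤ b - a + |a - c| := by
    calc |u - c| ≤ |u - a| + |a - c| := abs_sub_le u a c
      _ ≤ b - a + |a - c| := by
        rw [abs_of_pos (sub_pos.2 hu.1)]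
        linarith [hu.2]
  have hexp_le : exp (-u * p) ≤ exp (-a * p) :=
    exp_le_exp.2 (by nlinarith [hu.1, mem_Ioi.1 hp])
  simp only [Function.uncurry_apply_pair, norm_mul, norm_eq_abs, abs_exp]
  rw [mul_comm (exp (-a * p))]
  exact mul_le_mul hu_le hexp_le (exp_pos _).le ((abs_nonneg _).trans hu_le)

theorem one_sub_mul_log_one_add_inv_eq_integral {x : ℝ} (hx : 0 < x) :
    1 - (x + 1 / 2) * log (1 + 1 / x) =
      ∫ p in Ioi 0, exp (-x * p) * (1 - p / 2 - (p / 2 + 1) * exp (-p)) / p ^ 2 := by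
  calc 1 - (x + 1 / 2) * log (1 + 1 / x)
      = ∫ u in Ioc x (x + 1), (u - (x + 1 / 2)) / u := by
        rw [← intervalIntegral.integral_of_le (by linarith), integral_sub_div_self hx (by linarith),
          add_div, div_self hx.ne']
        ring
    _ = ∫ u in Ioc x (x + 1), ∫ p in Ioi 0, (u - (x + 1 / 2)) * exp (-u * p) :=
        setIntegral_congr_fun measurableSet_Ioc fun u hu ↦
          (integral_Ioi_sub_mul_exp_neg_mul _ (hx.trans hu.1)).symm
    _ = ∫ p in Ioi 0, ∫ u in Ioc x (x + 1), (u - (x + 1 / 2)) * exp (-u * p) :=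
        (integral_integral_swap (integrable_sub_mul_exp_neg_mul_prod hx _)).symm
    _ = ∫ p in Ioi 0, exp (-x * p) * (1 - p / 2 - (p / 2 + 1) * exp (-p)) / p ^ 2 :=
        setIntegral_congr_fun measurableSet_Ioi fun p hp ↦
          integral_Ioc_sub_mul_exp_neg_mul x (mem_Ioi.1 hp).ne'

theorem stmt11 (n : ℕ) (hn : 1 ≤ n) :
    1 - ((n : ℝ) + 1 / 2) * Real.log (1 + 1 / (n : ℝ)) =
      ∫ p in Ioi (0 : ℝ),
        Real.exp (-(n : ℝ) * p) * (1 - p / 2 - (p / 2 + 1) * Real.exp (-p)) / p ^ 2 :=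
  one_sub_mul_log_one_add_inv_eq_integral (by exact_mod_cast hn)
end
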